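/- For a rotation R_st mapping a unit vector r̂ to (0,1,0), the equivariant convolution output satisfies a^{(l_o)} = D^{(l_o)}(R_st^{-1}) · Σ_{l_i, l_f} (D^{(l_i)}(R_st) x^{(l_i)}) ⊗^{l_o}_{l_i,l_f} h_{l_i,l_f,l_o} Y^{(l_f)}((0,1,0)); i.e., the tensor-product convolution with filter direction r̂ equals the back-rotated tensor-product convolution with filter aligned to the y-axis. -/
import Mathlib


/-- The group `SO(3)` of rotations of `ℝ³`, as the subgroup of the orthogonal group
consisting of matrices with determinant one. -/
noncomputable def SO3 : Subgroup (Matrix.orthogonalGroup (Fin 3) ℝ) where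
  carrier := {A | Matrix.det (A : Matrix (Fin 3) (Fin 3) ℝ) = 1}
  one_mem' := by simp
  mul_mem' := by
    intro a b ha hb
    simp only [Set.mem_setOf_eq] at *
    simp [Matrix.det_mul, ha, hb]
  inv_mem' := by
    intro a ha
    simp only [Set.mem_setOf_eq] at *
    have h1 : ((a⁻¹ : Matrix.orthogonalGroup (Fin 3) ℝ) : Matrix (Fin 3) (Fin 3) ℝ)
        = Matrix.conjTranspose ((a : Matrix (Fin 3) (Fin 3) ℝ)) := rfl
    rw [h1, Matrix.det_conjTranspose, ha, star_one]

/-- The rotation matrix underlying an element of `SO3`. -/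
noncomputable def SO3.toMatrix (R : SO3) : Matrix (Fin 3) (Fin 3) ℝ :=
  ((R : Matrix.orthogonalGroup (Fin 3) ℝ) : Matrix (Fin 3) (Fin 3) ℝ)

/-- For a rotation `R_st` mapping the unit vector `r̂` to `(0,1,0)`, the equivariant
convolution with filter direction `r̂` equals the back-rotated equivariant convolution with
the filter aligned to the y-axis:
`Σ_{l_i,l_f} x^{(l_i)} ⊗ h Y^{(l_f)}(r̂)
  = D^{(l_o)}(R_st⁻¹) · Σ_{l_i,l_f} (D^{(l_i)}(R_st) x^{(l_i)}) ⊗ h Y^{(l_f)}((0,1,0))`. -/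
theorem aligned_equivariant_convolution (L lo : ℕ)
    (Y : (l : ℕ) → (Fin 3 → ℝ) → (Fin (2 * l + 1) → ℝ))
    (D : (l : ℕ) → SO3 → Matrix (Fin (2 * l + 1)) (Fin (2 * l + 1)) ℝ)
    (tp : (li lf : ℕ) → (Fin (2 * li + 1) → ℝ) → (Fin (2 * lf + 1) → ℝ) → (Fin (2 * lo + 1) → ℝ))
    (hD1 : ∀ l : ℕ, D l 1 = 1)
    (hDmul : ∀ (l : ℕ) (R S : SO3), D l (R * S) = D l R * D l S)
    (hY : ∀ (l : ℕ) (R : SO3) (r : Fin 3 → ℝ),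
      Y l ((SO3.toMatrix R).mulVec r) = (D l R).mulVec (Y l r))
    (hequi : ∀ (li lf : ℕ) (R : SO3) (u : Fin (2 * li + 1) → ℝ) (v : Fin (2 * lf + 1) → ℝ),
      (D lo R).mulVec (tp li lf u v) = tp li lf ((D li R).mulVec u) ((D lf R).mulVec v))
    (h : ℕ → ℕ → ℕ → ℝ)
    (x : (l : ℕ) → (Fin (2 * l + 1) → ℝ))
    (r : Fin 3 → ℝ) (Rst : SO3)
    (hR : (SO3.toMatrix Rst).mulVec r = ![0, 1, 0]) :
    (∑ li ∈ Finset.range (L + 1), ∑ lf ∈ Finset.range (L + 1),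
        tp li lf (x li) (h li lf lo • Y lf r))
      = (D lo Rst⁻¹).mulVec (∑ li ∈ Finset.range (L + 1), ∑ lf ∈ Finset.range (L + 1),
          tp li lf ((D li Rst).mulVec (x li)) (h li lf lo • Y lf ![0, 1, 0])) := by

  have hinv : ∀ l : ℕ, D l Rst⁻¹ * D l Rst = 1 := by
    intro l
    rw [← hDmul, inv_mul_cancel, hD1]
  have key : ∀ li lf : ℕ,
      (D lo Rst⁻¹).mulVec (tp li lf ((D li Rst).mulVec (x li))
        (h li lf lo • Y lf ![0, 1, 0]))
      = tp li lf (x li) (h li lf lo • Y lf r) := by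
    intro li lf
    rw [hequi, Matrix.mulVec_mulVec, hinv, Matrix.one_mulVec,
      Matrix.mulVec_smul, ← hR, hY lf Rst r, Matrix.mulVec_mulVec, hinv,
      Matrix.one_mulVec]
  simp only [← Matrix.mulVecLin_apply, map_sum]
  exact Finset.sum_congr rfl fun li _ => Finset.sum_congr rfl fun lf _ => (key li lf).symm
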